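/- Let Γ : L = ⊕_{j∈J} L_j be a fine group grading of a finite-dimensional complex Lie algebra L, let 𝐉 be an involutive antiautomorphism of L with real form L_𝐉, and suppose that for each j ∈ J there exist elements Z_{j,1},…,Z_{j,l_j} ∈ L_j such that (Z_{j,1},…,Z_{j,l_j}) is a ℂ-basis of L_j and 𝐉(Z_{j,l}) = Z_{j,l} for all l. Then the decomposition Γ^𝐉 : L_𝐉 = ⊕_{j∈J} L_j^ℝ, where L_j^ℝ = span_ℝ{Z_{j,1},…,Z_{j,l_j}}, is a fine group grading of the real Lie algebra L_𝐉. -/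

import Mathlib

variable {L : Type} [LieRing L] [LieAlgebra ℂ L]

/-- A complex Lie algebra is in particular a real vector space (restriction of scalars). -/
noncomputable instance realModuleOfComplex : Module ℝ L :=
  Module.compHom L (algebraMap ℝ ℂ)

/-- A group grading of the complex Lie algebra `L` by an abelian group `G`. -/
def IsGroupGrading {G : Type} [AddCommGroup G] (ℒ : G → Submodule ℂ L) : Prop :=
  iSupIndep ℒ ∧ (⨆ g, ℒ g) = ⊤ ∧
  ∀ g h : G, ∀ x ∈ ℒ g, ∀ y ∈ ℒ h, ⁅x, y⁆ ∈ ℒ (g + h)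

/-- A fine group grading of `L`: a group grading admitting no proper group refinement. -/
def IsFineGroupGrading {G : Type} [AddCommGroup G] (ℒ : G → Submodule ℂ L) : Prop :=
  IsGroupGrading ℒ ∧
  ∀ (H : Type) [AddCommGroup H], ∀ M : H → Submodule ℂ L,
    IsGroupGrading M → (∀ h, M h ≠ ⊥ → ∃ g, M h ≤ ℒ g) →
    {V : Submodule ℂ L | V ≠ ⊥ ∧ ∃ h, M h = V} = {V : Submodule ℂ L | V ≠ ⊥ ∧ ∃ g, ℒ g = V}

/-- A group grading of the real form `L_Jmap = {x ∈ L : Jmap(x) = x}` by an abelian group `H`: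
a family of real subspaces of `L`, independent, with sum exactly `L_Jmap`, and satisfying
`[M_g, M_h] ⊆ M_{g+h}`. -/
def IsGroupGradingOfRealForm (Jmap : L → L) {H : Type} [AddCommGroup H]
    (M : H → Submodule ℝ L) : Prop :=
  iSupIndep M ∧ ((⨆ h, M h : Submodule ℝ L) : Set L) = {x : L | Jmap x = x} ∧
  ∀ g h : H, ∀ x ∈ M g, ∀ y ∈ M h, ⁅x, y⁆ ∈ M (g + h)

/-- A fine group grading of the real form `L_Jmap`. -/
def IsFineGroupGradingOfRealForm (Jmap : L → L) {H : Type} [AddCommGroup H]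
    (M : H → Submodule ℝ L) : Prop :=
  IsGroupGradingOfRealForm Jmap M ∧
  ∀ (H' : Type) [AddCommGroup H'], ∀ N : H' → Submodule ℝ L,
    IsGroupGradingOfRealForm Jmap N → (∀ h', N h' ≠ ⊥ → ∃ h, N h' ≤ M h) →
    {W : Submodule ℝ L | W ≠ ⊥ ∧ ∃ h', N h' = W} =
      {W : Submodule ℝ L | W ≠ ⊥ ∧ ∃ h, M h = W}

/-! Because `J` is conjugate-linear, every element of the complex span of a `J`-fixed real
subspace `W` is uniquely `a + i b` with `a, b ∈ W` (apply `J` to read off `a` and `b`), and the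
`J`-fixed vectors of `span_ℂ W` are exactly `W`. So `W ↦ span_ℂ W` is injective on subspaces of
`L_J` and carries a family of them to a grading of `L` exactly when the family grades `L_J`
(sums need `J² = 1`, brackets need `J` to preserve the bracket). A refinement of
`Γ^J` therefore complexifies to a refinement of `Γ = span_ℂ Γ^J`, which cannot be proper. -/

open Submodule Complex

instance : IsScalarTower ℝ ℂ L :=
  ⟨fun r c x => mul_smul (r : ℂ) c x⟩

theorem real_smul_eq_complex_smul (r : ℝ) (x : L) : r • x = (r : ℂ) • x := rfl

theorem gc_span_complex_restrictScalars :
    GaloisConnection (fun W : Submodule ℝ L => span ℂ (W : Set L)) (restrictScalars ℝ) :=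
  fun _ _ => span_le

theorem span_complex_eq_bot_iff {W : Submodule ℝ L} : span ℂ (W : Set L) = ⊥ ↔ W = ⊥ := by
  rw [span_eq_bot, eq_bot_iff]
  rfl

theorem mem_span_complex_iff {W : Submodule ℝ L} {x : L} :
    x ∈ span ℂ (W : Set L) ↔ ∃ a ∈ W, ∃ b ∈ W, a + I • b = x := by
  refine ⟨fun hx => ?_, ?_⟩
  · induction hx using span_induction with
    | mem z hz => exact ⟨z, hz, 0, W.zero_mem, by simp⟩
    | zero => exact ⟨0, W.zero_mem, 0, W.zero_mem, by simp⟩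
    | add u v _ _ hu hv =>
      obtain ⟨a, ha, b, hb, rfl⟩ := hu
      obtain ⟨a', ha', b', hb', rfl⟩ := hv
      exact ⟨a + a', W.add_mem ha ha', b + b', W.add_mem hb hb', by module⟩
    | smul c u _ hu =>
      obtain ⟨a, ha, b, hb, rfl⟩ := hu
      refine ⟨c.re • a - c.im • b, W.sub_mem (W.smul_mem _ ha) (W.smul_mem _ hb),
        c.im • a + c.re • b, W.add_mem (W.smul_mem _ ha) (W.smul_mem _ hb), ?_⟩
      simp only [real_smul_eq_complex_smul]
      conv_rhs => rw [← re_add_im c]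
      match_scalars
      · ring
      · linear_combination -(c.im : ℂ) * I_sq
  · rintro ⟨a, ha, b, hb, rfl⟩
    exact add_mem (subset_span ha) (smul_mem _ _ (subset_span hb))

theorem lie_mem_span_complex {A B C : Submodule ℝ L} (h : ∀ x ∈ A, ∀ y ∈ B, ⁅x, y⁆ ∈ C)
    {x y : L} (hx : x ∈ span ℂ (A : Set L)) (hy : y ∈ span ℂ (B : Set L)) :
    ⁅x, y⁆ ∈ span ℂ (C : Set L) := by
  have hmap₂ := apply_mem_map₂ (LieModule.toEnd ℂ L L : L →ₗ[ℂ] Module.End ℂ L) hx hy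
  rw [map₂_span_span] at hmap₂
  refine span_mono ?_ hmap₂
  rintro _ ⟨a, ha, b, hb, rfl⟩
  exact h a ha b hb

section RealStructure

variable (J : L →ₗ⋆[ℂ] L)

protected theorem LinearMap.map_real_smul (r : ℝ) (x : L) : J (r • x) = r • J x := by
  rw [real_smul_eq_complex_smul, J.map_smulₛₗ, starRingEnd_apply, star_def, conj_ofReal]
  rfl

def fixedSubmodule : Submodule ℝ L where
  carrier := {x | J x = x}
  add_mem' {x y} (hx : J x = x) (hy : J y = y) := by
    simp only [Set.mem_ofPred_eq, map_add, hx, hy]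
  zero_mem' := map_zero J
  smul_mem' r x (hx : J x = x) := by
    simp only [Set.mem_ofPred_eq, J.map_real_smul, hx]

variable {J}

theorem map_add_I_smul {a b : L} (ha : J a = a) (hb : J b = b) : J (a + I • b) = a - I • b := by
  simp [ha, hb, sub_eq_add_neg]

theorem half_add_map_add_I_smul {a b : L} (ha : J a = a) (hb : J b = b) :
    (2⁻¹ : ℂ) • (a + I • b + J (a + I • b)) = a := by
  rw [map_add_I_smul ha hb]
  module

theorem half_sub_map_add_I_smul {a b : L} (ha : J a = a) (hb : J b = b) :
    (2⁻¹ : ℂ) • (a + I • b - J (a + I • b)) = I • b := by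
  rw [map_add_I_smul ha hb]
  module

theorem add_I_smul_inj {a b a' b' : L} (ha : J a = a) (hb : J b = b) (ha' : J a' = a')
    (hb' : J b' = b') (h : a + I • b = a' + I • b') : a = a' ∧ b = b' := by
  refine ⟨?_, smul_right_injective L I_ne_zero (?_ : I • b = I • b')⟩
  · rw [← half_add_map_add_I_smul ha hb, h, half_add_map_add_I_smul ha' hb']
  · rw [← half_sub_map_add_I_smul ha hb, h, half_sub_map_add_I_smul ha' hb']

theorem exists_add_I_smul (hJ : Function.Involutive J) (x : L) :
    ∃ a b, J a = a ∧ J b = b ∧ a + I • b = x := by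
  refine ⟨(2⁻¹ : ℂ) • (x + J x), (2⁻¹ * I : ℂ) • (J x - x), ?_, ?_, ?_⟩
  · simp [map_ofNat, hJ x, add_comm]
  · simp [map_ofNat, hJ x]
    module
  · rw [smul_smul, mul_left_comm, I_mul_I]
    module

theorem mem_of_mem_span_complex {W : Submodule ℝ L} (hW : W ≤ fixedSubmodule J) {x : L}
    (hx : x ∈ span ℂ (W : Set L)) (hJx : J x = x) : x ∈ W := by
  obtain ⟨a, ha, b, hb, rfl⟩ := mem_span_complex_iff.mp hx
  have hxa : a + I • b = a := by
    conv_rhs => rw [← half_add_map_add_I_smul (hW ha) (hW hb), hJx]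
    module
  rwa [hxa]

theorem span_complex_inj {W₁ W₂ : Submodule ℝ L} (h₁ : W₁ ≤ fixedSubmodule J)
    (h₂ : W₂ ≤ fixedSubmodule J) : span ℂ (W₁ : Set L) = span ℂ (W₂ : Set L) ↔ W₁ = W₂ := by
  refine ⟨fun h => le_antisymm (fun x hx => ?_) (fun x hx => ?_), fun h => h ▸ rfl⟩
  · exact mem_of_mem_span_complex h₂ (h ▸ subset_span hx) (h₁ hx)
  · exact mem_of_mem_span_complex h₁ (h ▸ subset_span hx) (h₂ hx)

theorem disjoint_span_complex_iff {W₁ W₂ : Submodule ℝ L} (h₁ : W₁ ≤ fixedSubmodule J)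
    (h₂ : W₂ ≤ fixedSubmodule J) :
    Disjoint (span ℂ (W₁ : Set L)) (span ℂ (W₂ : Set L)) ↔ Disjoint W₁ W₂ := by
  simp only [disjoint_def]
  refine ⟨fun h x hx₁ hx₂ => h x (subset_span hx₁) (subset_span hx₂), fun h x hx₁ hx₂ => ?_⟩
  obtain ⟨a, ha, b, hb, rfl⟩ := mem_span_complex_iff.mp hx₁
  obtain ⟨a', ha', b', hb', hab⟩ := mem_span_complex_iff.mp hx₂
  obtain ⟨rfl, rfl⟩ := add_I_smul_inj (h₁ ha) (h₁ hb) (h₂ ha') (h₂ hb') hab.symm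
  simp [h a ha ha', h b hb hb']

theorem iSupIndep_span_complex_iff {ι : Type*} {N : ι → Submodule ℝ L}
    (hN : ∀ i, N i ≤ fixedSubmodule J) :
    iSupIndep (fun i => span ℂ (N i : Set L)) ↔ iSupIndep N := by
  simp only [iSupIndep, ← gc_span_complex_restrictScalars.l_iSup₂]
  exact forall_congr' fun i => disjoint_span_complex_iff (hN i) (iSup₂_le fun j _ => hN j)

theorem span_complex_eq_top_iff (hJ : Function.Involutive J) {W : Submodule ℝ L}
    (hW : W ≤ fixedSubmodule J) : span ℂ (W : Set L) = ⊤ ↔ W = fixedSubmodule J := by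
  refine ⟨fun h => le_antisymm hW fun x hx => mem_of_mem_span_complex hW (h ▸ mem_top) hx, ?_⟩
  rintro rfl
  refine eq_top_iff.mpr fun x _ => ?_
  obtain ⟨a, b, ha, hb, rfl⟩ := exists_add_I_smul hJ x
  exact mem_span_complex_iff.mpr ⟨a, ha, b, hb, rfl⟩

end RealStructure

section Gradings

variable {J : L →ₗ⋆[ℂ] L}

theorem IsGroupGradingOfRealForm.le_fixedSubmodule {G : Type} [AddCommGroup G]
    {N : G → Submodule ℝ L} (h : IsGroupGradingOfRealForm J N) (g : G) :
    N g ≤ fixedSubmodule J :=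
  fun _ hx => h.2.1.subset (le_iSup N g hx)

theorem nonzero_components_subset_of_span_complex {ι κ : Type*} {A : ι → Submodule ℝ L}
    {B : κ → Submodule ℝ L} (hA : ∀ i, A i ≤ fixedSubmodule J) (hB : ∀ j, B j ≤ fixedSubmodule J)
    (h : {V : Submodule ℂ L | V ≠ ⊥ ∧ ∃ i, span ℂ (A i : Set L) = V} ⊆
      {V | V ≠ ⊥ ∧ ∃ j, span ℂ (B j : Set L) = V}) :
    {W : Submodule ℝ L | W ≠ ⊥ ∧ ∃ i, A i = W} ⊆ {W | W ≠ ⊥ ∧ ∃ j, B j = W} := by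
  rintro _ ⟨hW, i, rfl⟩
  obtain ⟨-, j, hj⟩ := h ⟨mt span_complex_eq_bot_iff.mp hW, i, rfl⟩
  exact ⟨hW, j, (span_complex_inj (hB j) (hA i)).mp hj⟩

variable (hJ : Function.Involutive J) (hJlie : ∀ x y, J ⁅x, y⁆ = ⁅J x, J y⁆)
include hJ hJlie

theorem isGroupGradingOfRealForm_iff {G : Type} [AddCommGroup G] {N : G → Submodule ℝ L}
    (hN : ∀ g, N g ≤ fixedSubmodule J) :
    IsGroupGradingOfRealForm J N ↔ IsGroupGrading fun g => span ℂ (N g : Set L) := by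
  have hsup : ((⨆ g, N g : Submodule ℝ L) : Set L) = {x | J x = x} ↔
      ⨆ g, span ℂ (N g : Set L) = ⊤ := by
    rw [← gc_span_complex_restrictScalars.l_iSup, span_complex_eq_top_iff hJ (iSup_le hN)]
    exact SetLike.coe_set_eq (p := ⨆ g, N g) (q := fixedSubmodule J)
  have hlie : (∀ g h, ∀ x ∈ N g, ∀ y ∈ N h, ⁅x, y⁆ ∈ N (g + h)) ↔
      ∀ g h, ∀ x ∈ span ℂ (N g : Set L), ∀ y ∈ span ℂ (N h : Set L),
        ⁅x, y⁆ ∈ span ℂ (N (g + h) : Set L) :=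
    ⟨fun hN' g h _ hx _ hy => lie_mem_span_complex (hN' g h) hx hy,
      fun hM g h x hx y hy => mem_of_mem_span_complex (hN _)
        (hM g h x (subset_span hx) y (subset_span hy)) (by rw [hJlie, hN g hx, hN h hy])⟩
  exact and_congr (iSupIndep_span_complex_iff hN).symm (and_congr hsup hlie)

theorem IsFineGroupGrading.isFineGroupGradingOfRealForm {G : Type} [AddCommGroup G]
    {R : G → Submodule ℝ L} (hR : ∀ g, R g ≤ fixedSubmodule J)
    (hfine : IsFineGroupGrading fun g => span ℂ (R g : Set L)) :
    IsFineGroupGradingOfRealForm J R := by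
  refine ⟨(isGroupGradingOfRealForm_iff hJ hJlie hR).mpr hfine.1, fun H _ N hN hNR => ?_⟩
  have hNfix := hN.le_fixedSubmodule
  have hcomponents := hfine.2 H _ ((isGroupGradingOfRealForm_iff hJ hJlie hNfix).mp hN)
    fun h hh => by
      obtain ⟨g, hg⟩ := hNR h (mt span_complex_eq_bot_iff.mpr hh)
      exact ⟨g, span_mono hg⟩
  exact (nonzero_components_subset_of_span_complex hNfix hR hcomponents.subset).antisymm
    (nonzero_components_subset_of_span_complex hR hNfix hcomponents.superset)

end Gradings

theorem statement13_general (L : Type) [LieRing L] [LieAlgebra ℂ L]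
    (G : Type) [AddCommGroup G] (ℒ : G → Submodule ℂ L)
    (hfine : IsFineGroupGrading ℒ)
    (Jmap : L → L)
    (hadd : ∀ x y : L, Jmap (x + y) = Jmap x + Jmap y)
    (hconj : ∀ (c : ℂ) (x : L), Jmap (c • x) = (starRingEnd ℂ) c • Jmap x)
    (hbr : ∀ x y : L, Jmap ⁅x, y⁆ = ⁅Jmap x, Jmap y⁆)
    (hinv : ∀ x : L, Jmap (Jmap x) = x)
    (Z : G → Set L)
    (hZfix : ∀ g, ∀ z ∈ Z g, Jmap z = z)
    (hZspan : ∀ g, Submodule.span ℂ (Z g) = ℒ g) :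
    IsFineGroupGradingOfRealForm Jmap (fun g => Submodule.span ℝ (Z g)) := by
  let J : L →ₗ⋆[ℂ] L := { toFun := Jmap, map_add' := hadd, map_smul' := hconj }
  have hℒ : (fun g => span ℂ (span ℝ (Z g) : Set L)) = ℒ :=
    funext fun g => (span_span_of_tower ℝ ℂ (Z g)).trans (hZspan g)
  exact (hℒ ▸ hfine).isFineGroupGradingOfRealForm (J := J) hinv hbr
    fun g => span_le.mpr (hZfix g)

/-- the `fundamental' method: let `Γ : L = ⊕_{j∈J} L_j` be a fine group
grading of a finite-dimensional complex Lie algebra `L`, let `Jmap` be an involutive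
antiautomorphism of `L` (conjugate-linear, bracket-preserving, and an involution), and
suppose every grading subspace `L_j` has a ℂ-basis `Z_j` consisting of `Jmap`-fixed
elements.  Then the real spans `L_j^ℝ = span_ℝ Z_j` form a fine group grading `Γ^Jmap` of
the real form `L_Jmap = {x ∈ L : Jmap(x) = x}`. -/
theorem statement13 (L : Type) [LieRing L] [LieAlgebra ℂ L] [FiniteDimensional ℂ L]
    (G : Type) [AddCommGroup G] (ℒ : G → Submodule ℂ L)
    (hfine : IsFineGroupGrading ℒ)
    (Jmap : L → L)
    (hadd : ∀ x y : L, Jmap (x + y) = Jmap x + Jmap y)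
    (hconj : ∀ (c : ℂ) (x : L), Jmap (c • x) = (starRingEnd ℂ) c • Jmap x)
    (hbr : ∀ x y : L, Jmap ⁅x, y⁆ = ⁅Jmap x, Jmap y⁆)
    (hinv : ∀ x : L, Jmap (Jmap x) = x)
    (Z : G → Set L)
    (hZsub : ∀ g, Z g ⊆ ℒ g)
    (hZfix : ∀ g, ∀ z ∈ Z g, Jmap z = z)
    (hZind : ∀ g, LinearIndependent ℂ ((↑) : Z g → L))
    (hZspan : ∀ g, Submodule.span ℂ (Z g) = ℒ g) :
    IsFineGroupGradingOfRealForm Jmap (fun g => Submodule.span ℝ (Z g)) :=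
  statement13_general L G ℒ hfine Jmap hadd hconj hbr hinv Z hZfix hZspan
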